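/- Let Y = (Y₁, Ỹ) be factors of variation, X the data, and Z₁ a representation variable with the Markov chains Y ↔ X ↔ Z₁ and X ↔ Y₁ ↔ Z₁ (minimality). Then Ỹ ↔ Y₁ ↔ Z₁ holds, i.e., I(Z₁;Ỹ|Y₁) = 0 (modularity). -/

import Mathlib

open BigOperators Real

variable {Ω : Type*} [Fintype Ω]

/-- `p` is a probability mass function on the finite sample space `Ω`. -/
def IsPMF {Ω : Type*} [Fintype Ω] (p : Ω → ℝ) : Prop :=
  (∀ ω, 0 ≤ p ω) ∧ ∑ ω, p ω = 1

/-- The probability that the random variable `A` takes the value `a`. -/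
noncomputable def prob {Ω : Type*} [Fintype Ω] (p : Ω → ℝ) {α : Type*} [DecidableEq α]
    (A : Ω → α) (a : α) : ℝ :=
  ∑ ω ∈ Finset.univ.filter (fun ω => A ω = a), p ω

/-- The Shannon entropy `H(A)` of the random variable `A`. -/
noncomputable def entropy {Ω : Type*} [Fintype Ω] (p : Ω → ℝ) {α : Type*} [DecidableEq α]
    (A : Ω → α) : ℝ :=
  -∑ a ∈ Finset.univ.image A, prob p A a * Real.log (prob p A a)

/-- The mutual information `I(A;B)`. -/
noncomputable def mutualInfo {Ω : Type*} [Fintype Ω] (p : Ω → ℝ) {α β : Type*}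
    [DecidableEq α] [DecidableEq β] (A : Ω → α) (B : Ω → β) : ℝ :=
  entropy p A + entropy p B - entropy p (fun ω => (A ω, B ω))

/-- The conditional mutual information `I(A;B∣C)`. -/
noncomputable def condMutualInfo {Ω : Type*} [Fintype Ω] (p : Ω → ℝ) {α β γ : Type*}
    [DecidableEq α] [DecidableEq β] [DecidableEq γ]
    (A : Ω → α) (B : Ω → β) (C : Ω → γ) : ℝ :=
  entropy p (fun ω => (A ω, C ω)) + entropy p (fun ω => (B ω, C ω))
    - entropy p (fun ω => (A ω, B ω, C ω)) - entropy p C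

/-- The conditional entropy `H(A∣C)`. -/
noncomputable def condEntropy {Ω : Type*} [Fintype Ω] (p : Ω → ℝ) {α γ : Type*}
    [DecidableEq α] [DecidableEq γ] (A : Ω → α) (C : Ω → γ) : ℝ :=
  entropy p (fun ω => (A ω, C ω)) - entropy p C


section Aux

lemma prob_nonneg' (p : Ω → ℝ) (hp : ∀ ω, 0 ≤ p ω) {α : Type*} [DecidableEq α]
    (A : Ω → α) (a : α) : 0 ≤ prob p A a :=
  Finset.sum_nonneg fun ω _ => hp ω

lemma le_prob (p : Ω → ℝ) (hp : ∀ ω, 0 ≤ p ω) {α : Type*} [DecidableEq α]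
    (A : Ω → α) (ω : Ω) : p ω ≤ prob p A (A ω) :=
  Finset.single_le_sum (f := p) (fun i _ => hp i) (by simp)

lemma prob_le_prob (p : Ω → ℝ) (hp : ∀ ω, 0 ≤ p ω) {α β : Type*} [DecidableEq α] [DecidableEq β]
    (A : Ω → α) (B : Ω → β) (a : α) (b : β)
    (h : ∀ ω, A ω = a → B ω = b) : prob p A a ≤ prob p B b := by
  apply Finset.sum_le_sum_of_subset_of_nonneg
  · intro ω hω
    simp only [Finset.mem_filter, Finset.mem_univ, true_and] at *
    exact h ω hω
  · intro i _ _; exact hp i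

lemma sum_fiber (p : Ω → ℝ) {α : Type*} [DecidableEq α] (F : Ω → α) (g : α → ℝ) :
    ∑ ω, p ω * g (F ω) = ∑ a ∈ Finset.univ.image F, prob p F a * g a := by
  rw [← Finset.sum_fiberwise_of_maps_to (g := F) (t := Finset.univ.image F)
      (fun x _ => Finset.mem_image_of_mem F (Finset.mem_univ x)) (fun ω => p ω * g (F ω))]
  refine Finset.sum_congr rfl fun a _ => ?_
  rw [prob, Finset.sum_mul]
  refine Finset.sum_congr rfl fun ω hω => ?_
  rw [(Finset.mem_filter.mp hω).2]

lemma entropy_eq_sum (p : Ω → ℝ) {α : Type*} [DecidableEq α] (A : Ω → α) :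
    entropy p A = -∑ ω, p ω * Real.log (prob p A (A ω)) := by
  rw [entropy, sum_fiber p A (fun a => Real.log (prob p A a))]

lemma entropy_congr (p : Ω → ℝ) {α β : Type*} [DecidableEq α] [DecidableEq β]
    {A : Ω → α} {B : Ω → β} (f : α → β) (g : β → α)
    (hf : ∀ ω, f (A ω) = B ω) (hg : ∀ ω, g (B ω) = A ω) :
    entropy p A = entropy p B := by
  have himg : Finset.univ.image B = (Finset.univ.image A).image f := by
    rw [Finset.image_image]
    congr 1
    funext ω
    exact (hf ω).symm
  have hprob : ∀ a ∈ Finset.univ.image A, prob p B (f a) = prob p A a := by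
    intro a ha
    obtain ⟨ω₀, _, rfl⟩ := Finset.mem_image.mp ha
    unfold prob
    congr 1
    ext ω
    simp only [Finset.mem_filter, Finset.mem_univ, true_and]
    constructor
    · intro h
      rw [hf ω₀] at h
      have := congrArg g h
      rwa [hg, hg] at this
    · intro h
      rw [← hf ω, h]
  have hinj : ∀ a ∈ Finset.univ.image A, ∀ b ∈ Finset.univ.image A, f a = f b → a = b := by
    intro a ha b hb h
    obtain ⟨ω₁, _, rfl⟩ := Finset.mem_image.mp ha
    obtain ⟨ω₂, _, rfl⟩ := Finset.mem_image.mp hb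
    have := congrArg g h
    rwa [hf, hf, hg, hg] at this
  rw [entropy, entropy, himg, Finset.sum_image hinj]
  exact congrArg Neg.neg (Finset.sum_congr rfl fun a ha => by rw [hprob a ha])

lemma cmi_eq_sum (p : Ω → ℝ) {α β γ : Type*} [DecidableEq α] [DecidableEq β] [DecidableEq γ]
    (A : Ω → α) (B : Ω → β) (C : Ω → γ) :
    condMutualInfo p A B C = ∑ ω, p ω *
      (Real.log (prob p (fun ω' => (A ω', B ω', C ω')) (A ω, B ω, C ω))
        + Real.log (prob p C (C ω))
        - Real.log (prob p (fun ω' => (A ω', C ω')) (A ω, C ω))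
        - Real.log (prob p (fun ω' => (B ω', C ω')) (B ω, C ω))) := by
  rw [condMutualInfo, entropy_eq_sum, entropy_eq_sum, entropy_eq_sum, entropy_eq_sum]
  simp only [mul_add, mul_sub, Finset.sum_sub_distrib, Finset.sum_add_distrib]
  ring

lemma prob_marginal (p : Ω → ℝ) {α γ : Type*} [DecidableEq α] [DecidableEq γ]
    (A : Ω → α) (C : Ω → γ) (c : γ) :
    ∑ a ∈ Finset.univ.image A, prob p (fun ω => (A ω, C ω)) (a, c) = prob p C c := by
  unfold prob
  rw [← Finset.sum_fiberwise_of_maps_to (s := Finset.univ.filter fun ω => C ω = c) (g := A)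
      (t := Finset.univ.image A) (fun x _ => Finset.mem_image_of_mem A (Finset.mem_univ x)) p]
  refine Finset.sum_congr rfl fun a _ => ?_
  congr 1
  ext ω
  simp [Finset.mem_filter, Prod.ext_iff, and_comm]

lemma sum_prob_image (p : Ω → ℝ) {α : Type*} [DecidableEq α] (A : Ω → α) :
    ∑ a ∈ Finset.univ.image A, prob p A a = ∑ ω, p ω := by
  have := sum_fiber p A (fun _ => (1:ℝ))
  simpa using this.symm

lemma cmi_nonneg (p : Ω → ℝ) (hp : IsPMF p) {α β γ : Type*}
    [DecidableEq α] [DecidableEq β] [DecidableEq γ]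
    (A : Ω → α) (B : Ω → β) (C : Ω → γ) : 0 ≤ condMutualInfo p A B C := by
  obtain ⟨hp0, hp1⟩ := hp
  have key : ∀ ω, p ω - p ω *
      (prob p (fun ω' => (A ω', C ω')) (A ω, C ω)
        * prob p (fun ω' => (B ω', C ω')) (B ω, C ω)
        / (prob p (fun ω' => (A ω', B ω', C ω')) (A ω, B ω, C ω) * prob p C (C ω)))
      ≤ p ω *
      (Real.log (prob p (fun ω' => (A ω', B ω', C ω')) (A ω, B ω, C ω))
        + Real.log (prob p C (C ω))
        - Real.log (prob p (fun ω' => (A ω', C ω')) (A ω, C ω))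
        - Real.log (prob p (fun ω' => (B ω', C ω')) (B ω, C ω))) := by
    intro ω
    rcases eq_or_lt_of_le (hp0 ω) with h | h
    · simp [← h]
    · have h1 : 0 < prob p (fun ω' => (A ω', B ω', C ω')) (A ω, B ω, C ω) :=
        lt_of_lt_of_le h (le_prob p hp0 (fun ω' => (A ω', B ω', C ω')) ω)
      have h2 : 0 < prob p (fun ω' => (A ω', C ω')) (A ω, C ω) :=
        lt_of_lt_of_le h (le_prob p hp0 (fun ω' => (A ω', C ω')) ω)
      have h3 : 0 < prob p (fun ω' => (B ω', C ω')) (B ω, C ω) :=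
        lt_of_lt_of_le h (le_prob p hp0 (fun ω' => (B ω', C ω')) ω)
      have h4 : 0 < prob p C (C ω) := lt_of_lt_of_le h (le_prob p hp0 C ω)
      have htpos : 0 < prob p (fun ω' => (A ω', C ω')) (A ω, C ω)
          * prob p (fun ω' => (B ω', C ω')) (B ω, C ω)
          / (prob p (fun ω' => (A ω', B ω', C ω')) (A ω, B ω, C ω) * prob p C (C ω)) :=
        div_pos (mul_pos h2 h3) (mul_pos h1 h4)
      have hlog := Real.log_le_sub_one_of_pos htpos
      rw [Real.log_div (by positivity) (by positivity),
        Real.log_mul h2.ne' h3.ne', Real.log_mul h1.ne' h4.ne'] at hlog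
      nlinarith [mul_le_mul_of_nonneg_left hlog h.le]
  have step2 : ∑ ω, p ω *
      (prob p (fun ω' => (A ω', C ω')) (A ω, C ω)
        * prob p (fun ω' => (B ω', C ω')) (B ω, C ω)
        / (prob p (fun ω' => (A ω', B ω', C ω')) (A ω, B ω, C ω) * prob p C (C ω)))
      ≤ 1 := by
    have hrw := sum_fiber p (fun ω => (A ω, B ω, C ω)) (fun x =>
      prob p (fun ω => (A ω, C ω)) (x.1, x.2.2) * prob p (fun ω => (B ω, C ω)) (x.2.1, x.2.2)
        / (prob p (fun ω => (A ω, B ω, C ω)) x * prob p C x.2.2))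
    simp only at hrw
    rw [hrw]
    have hb1 : ∑ x ∈ Finset.univ.image (fun ω => (A ω, B ω, C ω)),
        prob p (fun ω => (A ω, B ω, C ω)) x *
          (prob p (fun ω => (A ω, C ω)) (x.1, x.2.2)
            * prob p (fun ω => (B ω, C ω)) (x.2.1, x.2.2)
            / (prob p (fun ω => (A ω, B ω, C ω)) x * prob p C x.2.2))
        ≤ ∑ x ∈ Finset.univ.image (fun ω => (A ω, B ω, C ω)),
          prob p (fun ω => (A ω, C ω)) (x.1, x.2.2)
            * prob p (fun ω => (B ω, C ω)) (x.2.1, x.2.2) / prob p C x.2.2 := by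
      refine Finset.sum_le_sum fun x _ => ?_
      rcases eq_or_lt_of_le (prob_nonneg' p hp0 (fun ω => (A ω, B ω, C ω)) x) with h | h
      · rw [← h, zero_mul]
        exact div_nonneg (mul_nonneg (prob_nonneg' p hp0 _ _) (prob_nonneg' p hp0 _ _))
          (prob_nonneg' p hp0 _ _)
      · have hC : 0 < prob p C x.2.2 := lt_of_lt_of_le h
          (prob_le_prob p hp0 _ C x x.2.2 (fun ω hω => by
            simpa using congrArg (fun y : α × β × γ => y.2.2) hω))
        have heq : prob p (fun ω => (A ω, B ω, C ω)) x *
            (prob p (fun ω => (A ω, C ω)) (x.1, x.2.2)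
              * prob p (fun ω => (B ω, C ω)) (x.2.1, x.2.2)
              / (prob p (fun ω => (A ω, B ω, C ω)) x * prob p C x.2.2))
            = prob p (fun ω => (A ω, C ω)) (x.1, x.2.2)
              * prob p (fun ω => (B ω, C ω)) (x.2.1, x.2.2) / prob p C x.2.2 := by
          field_simp
        rw [heq]
    have hb2 : ∑ x ∈ Finset.univ.image (fun ω => (A ω, B ω, C ω)),
        prob p (fun ω => (A ω, C ω)) (x.1, x.2.2)
          * prob p (fun ω => (B ω, C ω)) (x.2.1, x.2.2) / prob p C x.2.2
        ≤ ∑ x ∈ (Finset.univ.image A) ×ˢ ((Finset.univ.image B) ×ˢ (Finset.univ.image C)),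
          prob p (fun ω => (A ω, C ω)) (x.1, x.2.2)
            * prob p (fun ω => (B ω, C ω)) (x.2.1, x.2.2) / prob p C x.2.2 := by
      refine Finset.sum_le_sum_of_subset_of_nonneg ?_ fun x _ _ =>
        div_nonneg (mul_nonneg (prob_nonneg' p hp0 _ _) (prob_nonneg' p hp0 _ _))
          (prob_nonneg' p hp0 _ _)
      intro x hx
      obtain ⟨ω, -, rfl⟩ := Finset.mem_image.mp hx
      simp only [Finset.mem_product, Finset.mem_image, Finset.mem_univ, true_and]
      exact ⟨⟨ω, rfl⟩, ⟨ω, rfl⟩, ⟨ω, rfl⟩⟩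
    have hb3 : ∑ x ∈ (Finset.univ.image A) ×ˢ ((Finset.univ.image B) ×ˢ (Finset.univ.image C)),
        prob p (fun ω => (A ω, C ω)) (x.1, x.2.2)
          * prob p (fun ω => (B ω, C ω)) (x.2.1, x.2.2) / prob p C x.2.2
        = ∑ c ∈ Finset.univ.image C, prob p C c := by
      rw [Finset.sum_product]
      simp only [Finset.sum_product]
      rw [Finset.sum_congr rfl fun a _ => Finset.sum_comm (s := Finset.univ.image B)
        (t := Finset.univ.image C) (f := fun b c => prob p (fun ω => (A ω, C ω)) (a, c)
          * prob p (fun ω => (B ω, C ω)) (b, c) / prob p C c)]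
      rw [Finset.sum_comm]
      refine Finset.sum_congr rfl fun c _ => ?_
      have inner : ∀ a, ∑ b ∈ Finset.univ.image B,
          prob p (fun ω => (A ω, C ω)) (a, c) * prob p (fun ω => (B ω, C ω)) (b, c)
            / prob p C c
          = prob p (fun ω => (A ω, C ω)) (a, c) *
              (∑ b ∈ Finset.univ.image B, prob p (fun ω => (B ω, C ω)) (b, c)) / prob p C c := by
        intro a
        rw [← Finset.sum_div, ← Finset.mul_sum]
      simp only [inner, prob_marginal p B C c]
      rw [← Finset.sum_div, ← Finset.sum_mul, prob_marginal p A C c]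
      rcases eq_or_ne (prob p C c) 0 with h | h
      · simp [h]
      · rw [mul_div_assoc, div_self h, mul_one]
    have htot : ∑ c ∈ Finset.univ.image C, prob p C c = 1 := by
      rw [sum_prob_image, hp1]
    linarith
  rw [cmi_eq_sum]
  have hsum := Finset.sum_le_sum (s := Finset.univ) (fun ω _ => key ω)
  rw [Finset.sum_sub_distrib, hp1] at hsum
  linarith

lemma cmi_symm (p : Ω → ℝ) {α β γ : Type*} [DecidableEq α] [DecidableEq β] [DecidableEq γ]
    (A : Ω → α) (B : Ω → β) (C : Ω → γ) :
    condMutualInfo p A B C = condMutualInfo p B A C := by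
  have e : entropy p (fun ω => (A ω, B ω, C ω)) = entropy p (fun ω => (B ω, A ω, C ω)) :=
    entropy_congr p (fun x => (x.2.1, x.1, x.2.2)) (fun x => (x.2.1, x.1, x.2.2))
      (fun ω => rfl) (fun ω => rfl)
  rw [condMutualInfo, condMutualInfo, e]
  ring

lemma cmi_chain (p : Ω → ℝ) {α β γ δ : Type*}
    [DecidableEq α] [DecidableEq β] [DecidableEq γ] [DecidableEq δ]
    (A : Ω → α) (B : Ω → β) (C : Ω → γ) (D : Ω → δ) :
    condMutualInfo p A (fun ω => (B ω, C ω)) D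
      = condMutualInfo p A B D + condMutualInfo p A C (fun ω => (B ω, D ω)) := by
  have e1 : entropy p (fun ω => ((B ω, C ω), D ω)) = entropy p (fun ω => (C ω, (B ω, D ω))) :=
    entropy_congr p (fun x => (x.1.2, (x.1.1, x.2))) (fun x => ((x.2.1, x.1), x.2.2))
      (fun ω => rfl) (fun ω => rfl)
  have e2 : entropy p (fun ω => (A ω, (B ω, C ω), D ω))
      = entropy p (fun ω => (A ω, C ω, (B ω, D ω))) :=
    entropy_congr p (fun x => (x.1, (x.2.1.2, (x.2.1.1, x.2.2))))
      (fun x => (x.1, ((x.2.2.1, x.2.1), x.2.2.2))) (fun ω => rfl) (fun ω => rfl)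
  simp only [condMutualInfo]
  rw [e1, e2]
  ring

lemma cmi_cond_comm (p : Ω → ℝ) {α β γ δ : Type*}
    [DecidableEq α] [DecidableEq β] [DecidableEq γ] [DecidableEq δ]
    (A : Ω → α) (B : Ω → β) (C : Ω → γ) (D : Ω → δ) :
    condMutualInfo p A B (fun ω => (C ω, D ω)) = condMutualInfo p A B (fun ω => (D ω, C ω)) := by
  have e1 : entropy p (fun ω => (A ω, (C ω, D ω))) = entropy p (fun ω => (A ω, (D ω, C ω))) :=
    entropy_congr p (fun x => (x.1, (x.2.2, x.2.1))) (fun x => (x.1, (x.2.2, x.2.1)))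
      (fun ω => rfl) (fun ω => rfl)
  have e2 : entropy p (fun ω => (B ω, (C ω, D ω))) = entropy p (fun ω => (B ω, (D ω, C ω))) :=
    entropy_congr p (fun x => (x.1, (x.2.2, x.2.1))) (fun x => (x.1, (x.2.2, x.2.1)))
      (fun ω => rfl) (fun ω => rfl)
  have e3 : entropy p (fun ω => (A ω, B ω, (C ω, D ω)))
      = entropy p (fun ω => (A ω, B ω, (D ω, C ω))) :=
    entropy_congr p (fun x => (x.1, (x.2.1, (x.2.2.2, x.2.2.1))))
      (fun x => (x.1, (x.2.1, (x.2.2.2, x.2.2.1)))) (fun ω => rfl) (fun ω => rfl)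
  have e4 : entropy p (fun ω => (C ω, D ω)) = entropy p (fun ω => (D ω, C ω)) :=
    entropy_congr p (fun x => (x.2, x.1)) (fun x => (x.2, x.1)) (fun ω => rfl) (fun ω => rfl)
  simp only [condMutualInfo]
  rw [e1, e2, e3, e4]

lemma cmi_B_comm (p : Ω → ℝ) {α β γ δ : Type*}
    [DecidableEq α] [DecidableEq β] [DecidableEq γ] [DecidableEq δ]
    (A : Ω → α) (B : Ω → β) (C : Ω → γ) (D : Ω → δ) :
    condMutualInfo p A (fun ω => (B ω, C ω)) D = condMutualInfo p A (fun ω => (C ω, B ω)) D := by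
  have e1 : entropy p (fun ω => ((B ω, C ω), D ω)) = entropy p (fun ω => ((C ω, B ω), D ω)) :=
    entropy_congr p (fun x => ((x.1.2, x.1.1), x.2)) (fun x => ((x.1.2, x.1.1), x.2))
      (fun ω => rfl) (fun ω => rfl)
  have e2 : entropy p (fun ω => (A ω, (B ω, C ω), D ω))
      = entropy p (fun ω => (A ω, (C ω, B ω), D ω)) :=
    entropy_congr p (fun x => (x.1, ((x.2.1.2, x.2.1.1), x.2.2)))
      (fun x => (x.1, ((x.2.1.2, x.2.1.1), x.2.2))) (fun ω => rfl) (fun ω => rfl)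
  simp only [condMutualInfo]
  rw [e1, e2]

end Aux

/-- **Proposition 2.** If `(Y₁,Ỹ) ↔ X ↔ Z₁` and `Z₁` is minimal for `Y₁`
(`X ↔ Y₁ ↔ Z₁`), then `Ỹ ↔ Y₁ ↔ Z₁` holds, i.e. `I(Z₁;Ỹ∣Y₁) = 0` (modularity). -/
theorem stmt_7 {Ω α β γ δ : Type*} [Fintype Ω]
    [DecidableEq α] [DecidableEq β] [DecidableEq γ] [DecidableEq δ]
    (p : Ω → ℝ) (hp : IsPMF p) (X : Ω → α) (Y₁ : Ω → β) (Yt : Ω → γ) (Z₁ : Ω → δ)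
    (hRep : condMutualInfo p (fun ω => (Y₁ ω, Yt ω)) Z₁ X = 0)
    (hMin : condMutualInfo p X Z₁ Y₁ = 0) :
    condMutualInfo p Z₁ Yt Y₁ = 0 := by
  have hsymm : condMutualInfo p Z₁ (fun ω => (Y₁ ω, Yt ω)) X = 0 := by
    rw [cmi_symm]; exact hRep
  have hchain1 := cmi_chain p Z₁ Y₁ Yt X
  have n1 := cmi_nonneg p hp Z₁ Y₁ X
  have n2 := cmi_nonneg p hp Z₁ Yt (fun ω => (Y₁ ω, X ω))
  have hZYtYX : condMutualInfo p Z₁ Yt (fun ω => (Y₁ ω, X ω)) = 0 := by linarith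
  have hZXY : condMutualInfo p Z₁ X Y₁ = 0 := by
    rw [cmi_symm]; exact hMin
  have hchain2 := cmi_chain p Z₁ X Yt Y₁
  have hcond : condMutualInfo p Z₁ Yt (fun ω => (X ω, Y₁ ω))
      = condMutualInfo p Z₁ Yt (fun ω => (Y₁ ω, X ω)) := cmi_cond_comm p Z₁ Yt X Y₁
  have hB : condMutualInfo p Z₁ (fun ω => (X ω, Yt ω)) Y₁
      = condMutualInfo p Z₁ (fun ω => (Yt ω, X ω)) Y₁ := cmi_B_comm p Z₁ X Yt Y₁
  have hchain3 := cmi_chain p Z₁ Yt X Y₁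
  have n3 := cmi_nonneg p hp Z₁ Yt Y₁
  have n4 := cmi_nonneg p hp Z₁ X (fun ω => (Yt ω, Y₁ ω))
  linarith
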